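/- arXiv:2007.06203 — 2 statements merged into one kernel-verified Lean document; each statement's English description precedes it below -/
import Mathlib

section
/- For the ultra-discrete KdV map with J < K, if m is a probability measure supported on [J/2, ∞) and X ~ m, Y ~ m + (K−J) are independent (where m + L denotes m shifted by L), then F^{(J,K)}(X,Y) has the same joint distribution as (X,Y). -/
/-!
Write `L = K - J`. If `X ≥ J/2` and `Y ≥ J/2 + L` then `X + Y ≥ K ≥ J`, so both maxima in `F` are
active and `F (X, Y) = (Y - L, X + L)` almost surely. This map swaps the coordinates and undoes the
shift on the first while applying it on the second, so it sends `m ⊗ (m + L)` to `(m + L - L) ⊗ (m + L)`,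
which is `m ⊗ (m + L)` again.
-/

open MeasureTheory

namespace MeasureTheory.Measure

theorem ae_prod_of_ae_fst_of_ae_snd {α β : Type*} [MeasurableSpace α] [MeasurableSpace β]
    {μ : Measure α} {ν : Measure β} {p : α → Prop} {q : β → Prop}
    (hp : ∀ᵐ x ∂μ, p x) (hq : ∀ᵐ y ∂ν, q y) : ∀ᵐ z ∂μ.prod ν, p z.1 ∧ q z.2 :=
  (quasiMeasurePreserving_fst.ae hp).and (quasiMeasurePreserving_snd.ae hq)

theorem map_prod_swap_map {α β γ δ : Type*} [MeasurableSpace α] [MeasurableSpace β]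
    [MeasurableSpace γ] [MeasurableSpace δ] (μ : Measure α) (ν : Measure β) [SFinite μ] [SFinite ν]
    {f : β → γ} {g : α → δ} (hf : Measurable f) (hg : Measurable g) :
    (μ.prod ν).map (fun p => (f p.2, g p.1)) = (ν.map f).prod (μ.map g) := by
  rw [map_prod_map ν μ hf hg, ← prod_swap, map_map (by fun_prop) measurable_swap]
  rfl

end MeasureTheory.Measure

def udKdV (J K : ℝ) (p : ℝ × ℝ) : ℝ × ℝ :=
  (p.2 - max (p.1 + p.2 - J) 0 + max (p.1 + p.2 - K) 0,
   p.1 - max (p.1 + p.2 - K) 0 + max (p.1 + p.2 - J) 0)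

theorem udKdV_of_le_add {J K : ℝ} (hJK : J ≤ K) {p : ℝ × ℝ} (hp : K ≤ p.1 + p.2) :
    udKdV J K p = (p.2 - (K - J), p.1 + (K - J)) := by
  rw [udKdV, max_eq_left (by linarith), max_eq_left (by linarith)]
  ext <;> ring

theorem ae_le_map_add_const {m : Measure ℝ} {a : ℝ} (ha : ∀ᵐ x ∂m, a ≤ x) (L : ℝ) :
    ∀ᵐ u ∂m.map (· + L), a + L ≤ u :=
  (ae_map_iff (measurable_add_const L).aemeasurable measurableSet_Ici).2 <| by
    filter_upwards [ha] with x hx using add_le_add_left hx L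

theorem map_sub_const_map_add_const (m : Measure ℝ) (L : ℝ) :
    (m.map (· + L)).map (· - L) = m := by
  rw [Measure.map_map (measurable_sub_const L) (measurable_add_const L)]
  simp only [Function.comp_def, add_sub_cancel_right, Measure.map_id']

theorem udKdV_shifted_detailed_balance (J K : ℝ) (hJK : J < K)
    (m : Measure ℝ) [IsProbabilityMeasure m]
    (hsupp : m (Set.Ici (J / 2)) = 1)
    (F : ℝ × ℝ → ℝ × ℝ)
    (hF : ∀ x u : ℝ, F (x, u) =
      (u - max (x + u - J) 0 + max (x + u - K) 0,
       x - max (x + u - K) 0 + max (x + u - J) 0)) :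
    Measure.map F (m.prod (Measure.map (fun x => x + (K - J)) m)) =
      m.prod (Measure.map (fun x => x + (K - J)) m) := by
  have hm : ∀ᵐ x ∂m, J / 2 ≤ x := (mem_ae_iff_prob_eq_one measurableSet_Ici).2 hsupp
  have hF_ae : F =ᵐ[m.prod (m.map (· + (K - J)))] fun p => (p.2 - (K - J), p.1 + (K - J)) := by
    filter_upwards [Measure.ae_prod_of_ae_fst_of_ae_snd hm (ae_le_map_add_const hm (K - J))]
      with p ⟨hx, hu⟩
    rw [show F p = udKdV J K p from hF p.1 p.2, udKdV_of_le_add hJK.le (by linarith)]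
  rw [Measure.map_congr hF_ae, Measure.map_prod_swap_map _ _ (measurable_sub_const _)
    (measurable_add_const _), map_sub_const_map_add_const]
end

section
/- Let X(ε) ~ Gam(ελ, e^{c/ε}) for λ > 0, c ∈ ℝ. Then the random variables −ε log X(ε) converge in distribution as ε ↓ 0 to the shifted exponential distribution sExp(λ, c), i.e. the distribution on [c,∞) with density λ e^{−λ(x−c)}. -/
open MeasureTheory ProbabilityTheory Filter

/-- The shifted exponential distribution `sExp(l, c)`:
density `l * exp (-l * (x - c))` on `[c, ∞)`. -/
noncomputable def sExpMeasure (l c : ℝ) : Measure ℝ :=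
  volume.withDensity fun x =>
    ENNReal.ofReal (if c ≤ x then l * Real.exp (-l * (x - c)) else 0)

/-! Substituting `x = exp (-y / ε)` shows that `-ε log X`, for `X ~ Gam(ελ, e^{c/ε})`, has density
`negLogGammaKernel ε λ c y / Γ(ελ + 1)` with kernel `λ e^{-λ(y-c)} exp (-e^{-(y-c)/ε})`.
As `ε → 0⁺`, `Γ(ελ + 1) → 1` and the double-exponential factor tends to the indicator of `y > c`,
while for `2λε ≤ 1` the kernel is dominated by `λ e^{-λ|y-c|}`; dominated convergence concludes. -/

open Real Set Topology
open scoped BoundedContinuousFunction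

section ChangeOfVariables

variable {E : Type*} [NormedAddCommGroup E] [NormedSpace ℝ E]

lemma integral_withDensity_ofReal {X : Type*} [MeasurableSpace X] {μ : Measure X} {d : X → ℝ}
    (hd : Measurable d) (hd_nonneg : 0 ≤ d) (g : X → E) :
    ∫ x, g x ∂(μ.withDensity fun x => ENNReal.ofReal (d x)) = ∫ x, d x • g x ∂μ := by
  rw [integral_withDensity_eq_integral_toReal_smul hd.ennreal_ofReal
    (ae_of_all _ fun _ => ENNReal.ofReal_lt_top)]
  simp only [ENNReal.toReal_ofReal (hd_nonneg _)]

lemma integral_gammaMeasure {a r : ℝ} (ha : 0 < a) (hr : 0 < r) (g : ℝ → E) :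
    ∫ x, g x ∂(gammaMeasure a r) = ∫ x in Ioi 0, gammaPDFReal a r x • g x := by
  rw [gammaMeasure, show gammaPDF a r = fun x => ENNReal.ofReal (gammaPDFReal a r x) from rfl,
    integral_withDensity_ofReal (measurable_gammaPDFReal a r) (gammaPDFReal_nonneg ha hr),
    ← integral_Ici_eq_integral_Ioi, setIntegral_eq_integral_of_forall_compl_eq_zero]
  intro x hx
  rw [gammaPDFReal, if_neg (by simpa using hx), zero_smul]

lemma integral_Ioi_eq_integral_exp_neg_div_smul {ε : ℝ} (hε : 0 < ε) (g : ℝ → E) :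
    ∫ x in Ioi 0, g x = ∫ y, (exp (-y / ε) / ε) • g (exp (-y / ε)) := by
  have himage : (fun y => exp (-y / ε)) '' univ = Ioi 0 := by
    rw [image_univ, ← Real.range_exp]
    exact Function.Surjective.range_comp (fun t => ⟨-(t * ε), by field_simp⟩) exp
  have hderiv (y : ℝ) : HasDerivAt (fun y => exp (-y / ε)) (exp (-y / ε) * (-1 / ε)) y :=
    ((hasDerivAt_neg y).div_const ε).exp
  have hinj : Function.Injective fun y => exp (-y / ε) :=
    Real.exp_injective.comp fun u v huv => by simpa [hε.ne'] using huv
  rw [← himage, integral_image_eq_integral_abs_deriv_smul MeasurableSet.univ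
    (fun y _ => (hderiv y).hasDerivWithinAt) hinj.injOn, Measure.restrict_univ]
  congr with y
  rw [abs_mul, abs_of_pos (exp_pos _), abs_div, abs_neg, abs_one, abs_of_pos hε, mul_one_div]

lemma integral_map_neg_mul_log_gammaMeasure {a r ε : ℝ} (ha : 0 < a) (hr : 0 < r) (hε : 0 < ε)
    {g : ℝ → E} (hg : StronglyMeasurable g) :
    ∫ y, g y ∂(Measure.map (fun x => -ε * log x) (gammaMeasure a r))
      = ∫ y, (exp (-y / ε) / ε * gammaPDFReal a r (exp (-y / ε))) • g y := by
  rw [integral_map (measurable_log.const_mul _).aemeasurable hg.aestronglyMeasurable,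
    integral_gammaMeasure ha hr, integral_Ioi_eq_integral_exp_neg_div_smul hε]
  congr with y
  rw [log_exp, smul_smul]
  congr 2
  field_simp

end ChangeOfVariables

noncomputable def negLogGammaKernel (ε lam c y : ℝ) : ℝ :=
  lam * exp (-lam * (y - c)) * exp (-exp (-(y - c) / ε))

lemma exp_neg_div_div_mul_gammaPDFReal {ε lam : ℝ} (hε : 0 < ε) (hlam : 0 < lam) (c y : ℝ) :
    exp (-y / ε) / ε * gammaPDFReal (ε * lam) (exp (c / ε)) (exp (-y / ε))
      = negLogGammaKernel ε lam c y / Gamma (ε * lam + 1) := by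
  have ha : 0 < ε * lam := mul_pos hε hlam
  rw [gammaPDFReal, if_pos (exp_pos _).le, ← exp_mul, ← exp_mul, Gamma_add_one ha.ne',
    negLogGammaKernel]
  have hΓ : Gamma (ε * lam) ≠ 0 := (Gamma_pos_of_pos ha).ne'
  have h1 : exp (c / ε) * exp (-y / ε) = exp (-(y - c) / ε) := by
    rw [← exp_add]; congr 1; ring
  have h2 : exp (-y / ε) * exp (-y / ε * (ε * lam - 1)) = exp (-lam * y) := by
    rw [← exp_add]; congr 1; field_simp; ring
  have h3 : exp (-lam * (y - c)) = exp (c / ε * (ε * lam)) * exp (-lam * y) := by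
    rw [← exp_add]; congr 1; field_simp; ring
  rw [h1, h3, ← h2]
  field_simp

noncomputable def sExpPDFReal (l c x : ℝ) : ℝ :=
  if c ≤ x then l * exp (-l * (x - c)) else 0

lemma integral_sExpMeasure {l : ℝ} (hl : 0 ≤ l) (c : ℝ) (g : ℝ → ℝ) :
    ∫ x, g x ∂(sExpMeasure l c) = ∫ x, sExpPDFReal l c x * g x :=
  integral_withDensity_ofReal (Measurable.ite measurableSet_Ici (by fun_prop) measurable_const)
    (fun x => by dsimp only; split_ifs <;> positivity) g

lemma integrable_exp_neg_mul_abs_sub {m : ℝ} (hm : 0 < m) (c : ℝ) :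
    Integrable fun y => exp (-m * |y - c|) := by
  refine Integrable.comp_sub_right (f := fun y => exp (-m * |y|)) ?_ c
  rw [← integrableOn_univ, ← Iic_union_Ioi (a := 0), integrableOn_union]
  constructor
  · refine (integrableOn_exp_mul_Iic hm 0).congr_fun
      (fun y (hy : y ≤ 0) => ?_) measurableSet_Iic
    rw [abs_of_nonpos hy, neg_mul_neg]
  · refine (integrableOn_exp_mul_Ioi (neg_lt_zero.2 hm) 0).congr_fun
      (fun y (hy : 0 < y) => ?_) measurableSet_Ioi
    rw [abs_of_pos hy]

lemma negLogGammaKernel_nonneg {lam : ℝ} (hlam : 0 ≤ lam) (ε c y : ℝ) :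
    0 ≤ negLogGammaKernel ε lam c y := by
  unfold negLogGammaKernel; positivity

lemma negLogGammaKernel_le {ε lam : ℝ} (hε : 0 < ε) (hlam : 0 < lam) (hε_le : 2 * lam * ε ≤ 1)
    (c y : ℝ) : negLogGammaKernel ε lam c y ≤ lam * exp (-lam * |y - c|) := by
  rw [negLogGammaKernel, mul_assoc, ← exp_add]
  gcongr
  rcases le_or_gt c y with h | h
  · rw [abs_of_nonneg (sub_nonneg.2 h)]
    linarith [exp_pos (-(y - c) / ε)]
  · rw [abs_of_neg (sub_neg.2 h)]
    have hdiv : 2 * lam * (c - y) ≤ -(y - c) / ε := by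
      rw [le_div_iff₀ hε]
      nlinarith
    linarith [add_one_le_exp (-(y - c) / ε)]

lemma tendsto_negLogGammaKernel (lam : ℝ) {c y : ℝ} (hy : y ≠ c) :
    Tendsto (fun ε => negLogGammaKernel ε lam c y) (𝓝[>] 0) (𝓝 (sExpPDFReal lam c y)) := by
  unfold negLogGammaKernel sExpPDFReal
  rcases hy.lt_or_gt with h | h
  · have hdiv : Tendsto (fun ε => -(y - c) / ε) (𝓝[>] 0) atTop := by
      simpa [div_eq_mul_inv] using
        tendsto_inv_nhdsGT_zero.const_mul_atTop (by linarith : 0 < -(y - c))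
    rw [if_neg h.not_ge]
    simpa using (tendsto_exp_neg_atTop_nhds_zero.comp (tendsto_exp_atTop.comp hdiv)).const_mul
      (lam * exp (-lam * (y - c)))
  · have hdiv : Tendsto (fun ε => -(y - c) / ε) (𝓝[>] 0) atBot := by
      simpa [div_eq_mul_inv] using
        tendsto_inv_nhdsGT_zero.const_mul_atTop_of_neg (by linarith : -(y - c) < 0)
    rw [if_pos h.le]
    simpa using
      ((tendsto_exp_atBot.comp hdiv).neg.rexp).const_mul (lam * exp (-lam * (y - c)))

lemma tendsto_Gamma_mul_add_one (lam : ℝ) :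
    Tendsto (fun ε => Gamma (ε * lam + 1)) (𝓝 0) (𝓝 1) := by
  have hcont : ContinuousAt Gamma (0 * lam + 1) :=
    (differentiableAt_Gamma fun m => by
      rw [zero_mul, zero_add]; linarith [m.cast_nonneg (α := ℝ)]).continuousAt
  simpa [Function.comp_def] using hcont.tendsto.comp (Continuous.tendsto (by fun_prop) 0)

lemma tendsto_integral_negLogGammaKernel_mul {lam : ℝ} (hlam : 0 < lam) (c : ℝ) (f : ℝ →ᵇ ℝ) :
    Tendsto (fun ε => ∫ y, negLogGammaKernel ε lam c y * f y) (𝓝[>] 0)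
      (𝓝 (∫ y, sExpPDFReal lam c y * f y)) := by
  have hsmall : ∀ᶠ ε in 𝓝[>] 0, 2 * lam * ε ≤ 1 :=
    nhdsWithin_le_nhds <| (Continuous.tendsto (by fun_prop) 0).eventually_le_const
      (by simp : 2 * lam * 0 < 1)
  refine tendsto_integral_filter_of_dominated_convergence
    (fun y => lam * exp (-lam * |y - c|) * ‖f‖)
    (Eventually.of_forall fun ε =>
      (Continuous.aestronglyMeasurable (by unfold negLogGammaKernel; fun_prop)))
    ?_ ((integrable_exp_neg_mul_abs_sub hlam c).const_mul lam |>.mul_const _) ?_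
  · filter_upwards [hsmall, self_mem_nhdsWithin] with ε hε_le (hε : 0 < ε)
    refine Eventually.of_forall fun y => ?_
    rw [norm_mul, Real.norm_of_nonneg (negLogGammaKernel_nonneg hlam.le ε c y)]
    exact mul_le_mul (negLogGammaKernel_le hε hlam hε_le c y) (f.norm_coe_le_norm y)
      (norm_nonneg _) (by positivity)
  · filter_upwards [measure_singleton c |> compl_mem_ae_iff.2] with y (hy : y ≠ c)
    exact (tendsto_negLogGammaKernel lam hy).mul_const (f y)

theorem gamma_ultradiscretization (lam c : ℝ) (hlam : 0 < lam) :
    ∀ f : BoundedContinuousFunction ℝ ℝ,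
      Tendsto
        (fun ε : ℝ => ∫ x, f x ∂(Measure.map (fun x => -ε * Real.log x)
          (gammaMeasure (ε * lam) (Real.exp (c / ε)))))
        (nhdsWithin 0 (Set.Ioi 0))
        (nhds (∫ x, f x ∂(sExpMeasure lam c))) := by
  intro f
  have hlaw : ∀ ε > 0, ∫ x, f x ∂(Measure.map (fun x => -ε * log x)
      (gammaMeasure (ε * lam) (exp (c / ε))))
        = (Gamma (ε * lam + 1))⁻¹ * ∫ y, negLogGammaKernel ε lam c y * f y := by
    intro ε hε
    rw [integral_map_neg_mul_log_gammaMeasure (mul_pos hε hlam) (exp_pos _) hε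
      f.continuous.stronglyMeasurable, ← integral_const_mul]
    congr 1 with y
    rw [smul_eq_mul, exp_neg_div_div_mul_gammaPDFReal hε hlam, div_eq_inv_mul, mul_assoc]
  have hΓ : Tendsto (fun ε => (Gamma (ε * lam + 1))⁻¹) (𝓝[>] 0) (𝓝 1) := by
    simpa using ((tendsto_Gamma_mul_add_one lam).inv₀ one_ne_zero).mono_left nhdsWithin_le_nhds
  rw [integral_sExpMeasure hlam.le]
  simpa using (hΓ.mul (tendsto_integral_negLogGammaKernel_mul hlam c f)).congr'
    (eventually_nhdsWithin_of_forall (s := Ioi 0) fun ε hε => (hlaw ε hε).symm)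
end
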